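/- Let H be a semisimple Hopf algebra over an algebraically closed field K of characteristic zero. If χ ∈ H* is an irreducible character of H and η is an irreducible character of H*, regarded via the identification H** ≅ H as an element of H, then the value χ(η) lies in the n-th cyclotomic field Q(ζ_n) ⊂ K, where n is the exponent of H and ζ_n is a primitive n-th root of unity in K. -/

import Mathlib

open TensorProduct LinearMap Coalgebra

/-- The `m`-th Sweedler power `h ↦ h₍₁₎ h₍₂₎ ⋯ h₍ₘ₎`, where `h₍₁₎ ⊗ ⋯ ⊗ h₍ₘ₎` is the
iterated comultiplication: for `m = 0` it is `ε(h)1`, and inductively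
`h ↦ ∑ h₍₁₎ * ((m)-th power of h₍₂₎)`. -/
noncomputable def sweedlerPow (K H : Type*) [Field K] [Ring H] [HopfAlgebra K H] :
    ℕ → (H →ₗ[K] H)
  | 0 => Algebra.linearMap K H ∘ₗ Coalgebra.counit
  | n + 1 => LinearMap.mul' K H ∘ₗ (sweedlerPow K H n).lTensor H ∘ₗ Coalgebra.comul

/-- The action of an element `a : A` on an `A`-module `M` as a `K`-linear
endomorphism of `M` (whose trace is the value of the character of `M` at `a`). -/
def actionEnd (K : Type*) {A M : Type*} [CommSemiring K] [Semiring A] [AddCommMonoid M]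
    [Module K M] [Module A M] [SMulCommClass K A M] (a : A) : M →ₗ[K] M where
  toFun m := a • m
  map_add' := smul_add a
  map_smul' k m := (smul_comm k a m).symm

/-!
Let `T = ∑ bᵢ ⊗ bᵢ*` be the canonical element of `H ⊗ H*`; under `H ⊗ H* ≅ End H` it is the
identity. Left multiplication by `T` corresponds, thanks to the convolution product on `H*`, to one
more step `f ↦ (h ↦ h₍₁₎ f(h₍₂₎))` of the Sweedler power recursion, so `T ^ m` corresponds to
`h ↦ h₍₁₎ ⋯ h₍ₘ₎` and `T ^ n = 1` for the exponent `n`. Hence `T` acts on `V ⊗ W` by an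
endomorphism of order dividing `n`, whose trace is a sum of `n`-th roots of unity. That trace
is `∑ χ(bᵢ) η'(bᵢ*) = χ(η)`, where `η'` is the character of `W`.
-/

namespace Module.End

variable {K M : Type*} [Field K] [AddCommGroup M] [Module K M]

theorem HasEigenvalue.pow_eq_one {f : End K M} {n : ℕ} (hf : f ^ n = 1) {μ : K}
    (hμ : f.HasEigenvalue μ) : μ ^ n = 1 := by
  obtain ⟨v, hv⟩ := hμ.exists_hasEigenvector
  apply smul_left_injective K hv.2
  simpa [hf] using (hv.pow_apply n).symm

theorem trace_mem_adjoin_of_pow_eq_one [IsAlgClosed K] [FiniteDimensional K M]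
    (R : Type*) [CommSemiring R] [Algebra R K] {f : End K M} {n : ℕ} (hn : 0 < n)
    (hf : f ^ n = 1) {ζ : K} (hζ : IsPrimitiveRoot ζ n) :
    trace K M f ∈ Algebra.adjoin R {ζ} := by
  rw [trace_eq_sum_roots_charpoly_of_splits (IsAlgClosed.splits f.charpoly)]
  refine multiset_sum_mem _ fun μ hμ => ?_
  have hμn : μ ^ n = 1 := HasEigenvalue.pow_eq_one hf <|
    (hasEigenvalue_iff_isRoot_charpoly f μ).2 (Polynomial.isRoot_of_mem_roots hμ)
  have : NeZero n := .of_pos hn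
  obtain ⟨i, -, rfl⟩ := hζ.eq_pow_of_pow_eq_one hμn
  exact pow_mem (Algebra.self_mem_adjoin_singleton R ζ) i

end Module.End

section TensorAction

variable (K : Type*) {A B V W : Type*} [Field K] [Ring A] [Algebra K A] [Ring B] [Algebra K B]
  [AddCommGroup V] [Module K V] [Module A V] [IsScalarTower K A V] [SMulCommClass K A V]
  [AddCommGroup W] [Module K W] [Module B W] [IsScalarTower K B W] [SMulCommClass K B W]

noncomputable def tensorLsmul : A ⊗[K] B →ₐ[K] Module.End K (V ⊗[K] W) :=
  have := SMulCommClass.symm K A V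
  have := SMulCommClass.symm K B W
  Module.endTensorEndAlgHom.comp
    (Algebra.TensorProduct.map (Algebra.lsmul K K V) (Algebra.lsmul K K W))

theorem tensorLsmul_tmul (a : A) (b : B) :
    tensorLsmul K (a ⊗ₜ b) =
      TensorProduct.map (actionEnd K a : V →ₗ[K] V) (actionEnd K b : W →ₗ[K] W) :=
  TensorProduct.ext' fun _ _ => rfl

end TensorAction

section CanonicalElement

variable {K H Hd : Type*} [Field K] [AddCommGroup H] [Module K H] [FiniteDimensional K H]
  [AddCommGroup Hd] [Module K Hd] (Φ : Hd ≃ₗ[K] Module.Dual K H)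

noncomputable def tensorDualEquivEnd : H ⊗[K] Hd ≃ₗ[K] Module.End K H :=
  TensorProduct.congr (LinearEquiv.refl K H) Φ ≪≫ₗ TensorProduct.comm K H (Module.Dual K H)
    ≪≫ₗ dualTensorHomEquiv K H H

@[simp]
theorem tensorDualEquivEnd_tmul_apply (a : H) (d : Hd) (h : H) :
    tensorDualEquivEnd Φ (a ⊗ₜ d) h = Φ d h • a := by
  simp [tensorDualEquivEnd]

noncomputable def canonicalElement : H ⊗[K] Hd :=
  (tensorDualEquivEnd Φ).symm LinearMap.id

theorem canonicalElement_eq_sum {ι : Type*} [Fintype ι] (b : Module.Basis ι K H) :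
    canonicalElement Φ = ∑ i, b i ⊗ₜ Φ.symm (b.coord i) := by
  rw [canonicalElement, LinearEquiv.symm_apply_eq]
  ext h
  simp [b.sum_repr h]

end CanonicalElement

section Character

variable {K H Hd : Type*} [Field K] [Ring H] [Algebra K H] [FiniteDimensional K H]
  [Ring Hd] [Algebra K Hd] (Φ : Hd ≃ₗ[K] Module.Dual K H)

theorem trace_tensorLsmul_canonicalElement
    {V : Type*} [AddCommGroup V] [Module K V] [Module H V] [IsScalarTower K H V]
    [SMulCommClass K H V] [FiniteDimensional K V]
    {W : Type*} [AddCommGroup W] [Module K W] [Module Hd W] [IsScalarTower K Hd W]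
    [SMulCommClass K Hd W] [FiniteDimensional K W]
    {η : H} (hη : ∀ a : Hd, Φ a η = LinearMap.trace K W (actionEnd K a)) :
    LinearMap.trace K (V ⊗[K] W) (tensorLsmul K (canonicalElement Φ)) =
      LinearMap.trace K V (actionEnd K η) := by
  let b := Module.finBasis K H
  let χ : Module.Dual K H := LinearMap.trace K V ∘ₗ (Algebra.lsmul K K V).toLinearMap
  calc LinearMap.trace K (V ⊗[K] W) (tensorLsmul K (canonicalElement Φ))
      = ∑ i, χ (b i) * b.coord i η := by
        simp [canonicalElement_eq_sum Φ b, tensorLsmul_tmul, trace_tensorProduct', ← hη]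
        rfl
    _ = χ η := by
        conv_rhs => rw [← b.sum_repr η]
        simp only [map_sum, map_smul, smul_eq_mul, mul_comm, Module.Basis.coord_apply]
    _ = LinearMap.trace K V (actionEnd K η) := rfl

theorem tensorDualEquivEnd_canonicalElement_mul [Coalgebra K H]
    (hΦmul : ∀ a b : Hd,
      Φ (a * b) = mul' K K ∘ₗ TensorProduct.map (Φ a) (Φ b) ∘ₗ Coalgebra.comul)
    (t : H ⊗[K] Hd) :
    tensorDualEquivEnd Φ (canonicalElement Φ * t) =
      mul' K H ∘ₗ (tensorDualEquivEnd Φ t).lTensor H ∘ₗ Coalgebra.comul := by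
  induction t using TensorProduct.induction_on with
  | zero => simp
  | add x y hx hy => simp only [mul_add, map_add, hx, hy, lTensor_add, add_comp, comp_add]
  | tmul a d =>
    let b := Module.finBasis K H
    ext h
    rw [canonicalElement_eq_sum Φ b, Finset.sum_mul]
    simp only [Algebra.TensorProduct.tmul_mul_tmul, map_sum, LinearMap.sum_apply,
      tensorDualEquivEnd_tmul_apply, hΦmul, Φ.apply_symm_apply, LinearMap.comp_apply]
    generalize Coalgebra.comul (R := K) h = x
    induction x using TensorProduct.induction_on with
    | zero => simp
    | add x y hx hy => simp only [map_add, add_smul, Finset.sum_add_distrib, hx, hy]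
    | tmul x y =>
      simp only [map_tmul, lTensor_tmul, mul'_apply, tensorDualEquivEnd_tmul_apply]
      calc ∑ i, (b.coord i x * Φ d y) • (b i * a)
          = (∑ i, b.coord i x • b i) * (Φ d y • a) := by
            simp only [Finset.sum_mul, smul_mul_smul_comm]
        _ = x * (Φ d y • a) := by simp [b.sum_repr x]

end Character

section Exponent

variable {K H Hd : Type*} [Field K] [Ring H] [HopfAlgebra K H] [FiniteDimensional K H]
  [Ring Hd] [Algebra K Hd] (Φ : Hd ≃ₗ[K] Module.Dual K H)

theorem tensorDualEquivEnd_canonicalElement_pow (hΦone : Φ 1 = Coalgebra.counit)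
    (hΦmul : ∀ a b : Hd,
      Φ (a * b) = mul' K K ∘ₗ TensorProduct.map (Φ a) (Φ b) ∘ₗ Coalgebra.comul)
    (m : ℕ) :
    tensorDualEquivEnd Φ (canonicalElement Φ ^ m) = sweedlerPow K H m := by
  induction m with
  | zero =>
    ext h
    simp [Algebra.TensorProduct.one_def, hΦone, sweedlerPow, Algebra.algebraMap_eq_smul_one]
  | succ m ih =>
    rw [pow_succ', tensorDualEquivEnd_canonicalElement_mul Φ hΦmul, ih, sweedlerPow]

theorem canonicalElement_pow_eq_one (hΦone : Φ 1 = Coalgebra.counit)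
    (hΦmul : ∀ a b : Hd,
      Φ (a * b) = mul' K K ∘ₗ TensorProduct.map (Φ a) (Φ b) ∘ₗ Coalgebra.comul)
    {n : ℕ} (hn : sweedlerPow K H n = Algebra.linearMap K H ∘ₗ Coalgebra.counit) :
    canonicalElement Φ ^ n = 1 := by
  rw [← pow_zero (canonicalElement Φ)]
  apply (tensorDualEquivEnd Φ).injective
  rw [tensorDualEquivEnd_canonicalElement_pow Φ hΦone hΦmul,
    tensorDualEquivEnd_canonicalElement_pow Φ hΦone hΦmul, hn, sweedlerPow]

end Exponent

theorem character_value_mem_cyclotomic_field_general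
    {K H : Type*} [Field K] [IsAlgClosed K] [CharZero K]
    [Ring H] [HopfAlgebra K H] [FiniteDimensional K H]
    -- the dual algebra `Hd ≅ H*`, with convolution product and unit the counit
    (Hd : Type*) [Ring Hd] [Algebra K Hd]
    (Φ : Hd ≃ₗ[K] Module.Dual K H)
    (hΦone : Φ 1 = Coalgebra.counit)
    (hΦmul : ∀ a b : Hd, (Φ (a * b) : Module.Dual K H) =
      LinearMap.mul' K K ∘ₗ TensorProduct.map (Φ a) (Φ b) ∘ₗ Coalgebra.comul)
    -- a simple `H`-module `V`; its character is `χ = h ↦ trace of h on V`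
    (V : Type*) [AddCommGroup V] [Module K V] [Module H V]
    [IsScalarTower K H V] [SMulCommClass K H V] [FiniteDimensional K V]
    -- a simple `Hd`-module `W`; its character, viewed in `H` via `H** ≅ H`, is `η`
    (W : Type*) [AddCommGroup W] [Module K W] [Module Hd W]
    [IsScalarTower K Hd W] [SMulCommClass K Hd W] [FiniteDimensional K W]
    (η : H)
    (hη : ∀ a : Hd, Φ a η = LinearMap.trace K W (actionEnd K a))
    -- `n` is the exponent of `H`
    (n : ℕ)
    (hn : IsLeast {m : ℕ | 0 < m ∧
      sweedlerPow K H m = Algebra.linearMap K H ∘ₗ Coalgebra.counit} n)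
    (ζ : K) (hζ : IsPrimitiveRoot ζ n) :
    LinearMap.trace K V (actionEnd K η) ∈ Algebra.adjoin ℚ {ζ} := by
  obtain ⟨⟨hpos, hexp⟩, -⟩ := hn
  have hT : canonicalElement Φ ^ n = 1 := canonicalElement_pow_eq_one Φ hΦone hΦmul hexp
  have hρT : tensorLsmul K (canonicalElement Φ) ^ n = (1 : Module.End K (V ⊗[K] W)) := by
    rw [← map_pow, hT, map_one]
  rw [← trace_tensorLsmul_canonicalElement Φ hη]
  exact Module.End.trace_mem_adjoin_of_pow_eq_one ℚ hpos hρT hζ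

/-- Let `H` be a semisimple Hopf algebra over an algebraically closed
field `K` of characteristic zero.  If `χ` is an irreducible character of `H` (the
trace character of a simple `H`-module `V`) and `η` is an irreducible character of
`H*` (the trace character of a simple module `W` over the dual algebra `Hd ≅ H*`),
regarded via the identification `H** ≅ H` as an element of `H` (hypothesis `hη`),
then the value `χ(η)` lies in the `n`-th cyclotomic field `ℚ(ζₙ) ⊆ K`, where `n` is
the exponent of `H` and `ζₙ` is a primitive `n`-th root of unity of `K`. -/
theorem character_value_mem_cyclotomic_field
    {K H : Type*} [Field K] [IsAlgClosed K] [CharZero K]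
    [Ring H] [HopfAlgebra K H] [FiniteDimensional K H] [IsSemisimpleRing H]
    -- the dual algebra `Hd ≅ H*`, with convolution product and unit the counit
    (Hd : Type*) [Ring Hd] [Algebra K Hd]
    (Φ : Hd ≃ₗ[K] Module.Dual K H)
    (hΦone : Φ 1 = Coalgebra.counit)
    (hΦmul : ∀ a b : Hd, (Φ (a * b) : Module.Dual K H) =
      LinearMap.mul' K K ∘ₗ TensorProduct.map (Φ a) (Φ b) ∘ₗ Coalgebra.comul)
    -- a simple `H`-module `V`; its character is `χ = h ↦ trace of h on V`
    (V : Type*) [AddCommGroup V] [Module K V] [Module H V]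
    [IsScalarTower K H V] [SMulCommClass K H V] [FiniteDimensional K V]
    [IsSimpleModule H V]
    -- a simple `Hd`-module `W`; its character, viewed in `H` via `H** ≅ H`, is `η`
    (W : Type*) [AddCommGroup W] [Module K W] [Module Hd W]
    [IsScalarTower K Hd W] [SMulCommClass K Hd W] [FiniteDimensional K W]
    [IsSimpleModule Hd W]
    (η : H)
    (hη : ∀ a : Hd, Φ a η = LinearMap.trace K W (actionEnd K a))
    -- `n` is the exponent of `H`
    (n : ℕ)
    (hn : IsLeast {m : ℕ | 0 < m ∧
      sweedlerPow K H m = Algebra.linearMap K H ∘ₗ Coalgebra.counit} n)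
    (ζ : K) (hζ : IsPrimitiveRoot ζ n) :
    LinearMap.trace K V (actionEnd K η) ∈ Algebra.adjoin ℚ {ζ} :=
  character_value_mem_cyclotomic_field_general Hd Φ hΦone hΦmul V W η hη n hn ζ hζ
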